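/- arXiv:0804.1883 — 2 statements merged into one kernel-verified Lean document; each statement's English description precedes it below -/
import Mathlib

section
/- Let (a_k) be a sequence of positive reals with a_k → 0 and A_n := ∑_{k=1}^n a_k → ∞. Define σ_k := c a_{k+1} exp(−A_k) where c > 0 normalizes ∑_k σ_k = 1. Then (i) the series ∑_k a_{k+1} exp(−A_k) converges (so c exists), since a_{k+1} exp(−A_k) ∼ exp(−A_k) − exp(−A_{k+1}); (ii) the tails T_n := ∑_{k=n}^∞ σ_k satisfy T_n ∼ c exp(−A_{n−1}) as n → ∞; and (iii) σ_n / T_n ∼ a_{n+1}. -/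
open Filter Real
open scoped Topology

/-!
Write `E k = exp (-A k)`. Since `1 - exp (-d) ≤ d ≤ exp d - 1`, the weight `(A (k+1) - A k) E k`
lies between the telescoping difference `E k - E (k+1)` and `exp (A (k+1) - A k)` times it.
Summing over `k ≥ n`, the tail lies between `E n` and `exp δ * E n`, where `δ` bounds the
increments beyond `n`; as the increments tend to `0`, the ratio of the tail to `E n` tends to `1`.
Parts (ii) and (iii) are rewritings of this limit, using `E n = E (n-1) * exp (-a n)`.
-/

theorem exp_neg_sub_exp_neg_add_le (t d : ℝ) : exp (-t) - exp (-(t + d)) ≤ d * exp (-t) := by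
  rw [neg_add, exp_add]
  nlinarith [add_one_le_exp (-d), exp_pos (-t)]

theorem mul_exp_neg_le_exp_mul_sub (t d : ℝ) :
    d * exp (-t) ≤ exp d * (exp (-t) - exp (-(t + d))) := by
  have hcancel : exp d * exp (-(t + d)) = exp (-t) := by rw [← exp_add]; ring_nf
  rw [mul_sub, hcancel]
  nlinarith [add_one_le_exp d, exp_pos (-t)]

-- `c * expTail A n` is the tail `T n` of the normalized weights.
noncomputable def expTail (A : ℕ → ℝ) (n : ℕ) : ℝ :=
  ∑' j, (A (n + j + 1) - A (n + j)) * exp (-A (n + j))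

section

variable {A : ℕ → ℝ}

theorem exp_neg_sub_exp_neg_succ_nonneg (hmono : Monotone A) (k : ℕ) :
    0 ≤ exp (-A k) - exp (-A (k + 1)) :=
  sub_nonneg.2 (exp_le_exp.2 (neg_le_neg (hmono k.le_succ)))

theorem increment_mul_exp_neg_nonneg (hmono : Monotone A) (k : ℕ) :
    0 ≤ (A (k + 1) - A k) * exp (-A k) :=
  mul_nonneg (sub_nonneg.2 (hmono k.le_succ)) (exp_pos _).le

theorem exp_neg_sub_exp_neg_succ_le (k : ℕ) :
    exp (-A k) - exp (-A (k + 1)) ≤ (A (k + 1) - A k) * exp (-A k) := by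
  simpa using exp_neg_sub_exp_neg_add_le (A k) (A (k + 1) - A k)

theorem increment_mul_exp_neg_le (hmono : Monotone A) {k : ℕ} {δ : ℝ}
    (hδ : A (k + 1) - A k ≤ δ) :
    (A (k + 1) - A k) * exp (-A k) ≤ exp δ * (exp (-A k) - exp (-A (k + 1))) :=
  calc (A (k + 1) - A k) * exp (-A k)
      ≤ exp (A (k + 1) - A k) * (exp (-A k) - exp (-A (k + 1))) := by
        simpa using mul_exp_neg_le_exp_mul_sub (A k) (A (k + 1) - A k)
    _ ≤ exp δ * (exp (-A k) - exp (-A (k + 1))) :=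
        mul_le_mul_of_nonneg_right (exp_le_exp.2 hδ) (exp_neg_sub_exp_neg_succ_nonneg hmono k)

theorem hasSum_exp_neg_sub_exp_neg_succ (hmono : Monotone A) (htop : Tendsto A atTop atTop)
    (n : ℕ) : HasSum (fun j => exp (-A (n + j)) - exp (-A (n + j + 1))) (exp (-A n)) := by
  rw [hasSum_iff_tendsto_nat_of_nonneg fun j => exp_neg_sub_exp_neg_succ_nonneg hmono (n + j)]
  have hpartial : ∀ m, ∑ j ∈ Finset.range m, (exp (-A (n + j)) - exp (-A (n + j + 1))) =
      exp (-A n) - exp (-A (n + m)) := Finset.sum_range_sub' (fun j => exp (-A (n + j)))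
  have hshift : Tendsto (fun m => A (n + m)) atTop atTop :=
    htop.comp (tendsto_add_atTop_nat n |>.congr fun m => add_comm m n)
  have hE : Tendsto (fun m => exp (-A (n + m))) atTop (𝓝 0) :=
    tendsto_exp_atBot.comp (tendsto_neg_atTop_atBot.comp hshift)
  simpa [hpartial] using hE.const_sub (exp (-A n))

theorem summable_increment_mul_exp_neg (hmono : Monotone A)
    (hbdd : BddAbove (Set.range fun k => A (k + 1) - A k)) :
    Summable fun k => (A (k + 1) - A k) * exp (-A k) := by
  obtain ⟨C, hC⟩ := hbdd
  have htel : Summable fun k => exp (-A k) - exp (-A (k + 1)) :=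
    summable_of_sum_range_le (exp_neg_sub_exp_neg_succ_nonneg hmono) fun m => by
      rw [Finset.sum_range_sub']
      linarith [exp_pos (-A m)]
  exact Summable.of_nonneg_of_le (increment_mul_exp_neg_nonneg hmono)
    (fun k => increment_mul_exp_neg_le hmono (hC ⟨k, rfl⟩)) (htel.mul_left (exp C))

theorem exp_neg_le_expTail (hmono : Monotone A) (htop : Tendsto A atTop atTop)
    (hs : Summable fun k => (A (k + 1) - A k) * exp (-A k)) (n : ℕ) :
    exp (-A n) ≤ expTail A n := by
  have htel := hasSum_exp_neg_sub_exp_neg_succ hmono htop n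
  rw [← htel.tsum_eq, expTail]
  exact Summable.tsum_le_tsum (fun j => exp_neg_sub_exp_neg_succ_le (n + j)) htel.summable
    ((summable_nat_add_iff n).2 hs |>.congr fun j => by rw [add_comm j n])

theorem expTail_le_exp_mul_exp_neg (hmono : Monotone A) (htop : Tendsto A atTop atTop) {n : ℕ}
    {δ : ℝ} (hδ : ∀ j, A (n + j + 1) - A (n + j) ≤ δ) :
    expTail A n ≤ exp δ * exp (-A n) := by
  have htel := hasSum_exp_neg_sub_exp_neg_succ hmono htop n
  have hle := fun j => increment_mul_exp_neg_le hmono (hδ j)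
  rw [← htel.tsum_eq, ← tsum_mul_left]
  exact Summable.tsum_le_tsum hle
    (Summable.of_nonneg_of_le (fun j => increment_mul_exp_neg_nonneg hmono (n + j)) hle
      (htel.summable.mul_left _))
    (htel.summable.mul_left _)

theorem tendsto_expTail_div_exp_neg (hmono : Monotone A) (htop : Tendsto A atTop atTop)
    (hinc : Tendsto (fun k => A (k + 1) - A k) atTop (𝓝 0)) :
    Tendsto (fun n => expTail A n / exp (-A n)) atTop (𝓝 1) := by
  have hs := summable_increment_mul_exp_neg hmono hinc.bddAbove_range
  refine tendsto_order.2 ⟨fun b hb => Eventually.of_forall fun n => hb.trans_le ?_,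
    fun b hb => ?_⟩
  · exact (one_le_div (exp_pos _)).2 (exp_neg_le_expTail hmono htop hs n)
  · have hδ : 0 < log b / 2 := by linarith [log_pos hb]
    obtain ⟨N, hN⟩ := eventually_atTop.1 ((tendsto_order.1 hinc).2 _ hδ)
    filter_upwards [eventually_ge_atTop N] with n hn
    calc expTail A n / exp (-A n) ≤ exp (log b / 2) :=
          (div_le_iff₀ (exp_pos _)).2
            (expTail_le_exp_mul_exp_neg hmono htop fun j => (hN (n + j) (by omega)).le)
      _ < exp (log b) := exp_lt_exp.2 (by linarith)
      _ = b := exp_log (by linarith)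

theorem tendsto_expTail_div_exp_neg_pred (hmono : Monotone A) (htop : Tendsto A atTop atTop)
    (hinc : Tendsto (fun k => A (k + 1) - A k) atTop (𝓝 0)) :
    Tendsto (fun n => expTail A n / exp (-A (n - 1))) atTop (𝓝 1) := by
  have hstep : Tendsto (fun k => exp (-(A (k + 1) - A k))) atTop (𝓝 1) := by
    have hneg : Tendsto (fun k => -(A (k + 1) - A k)) atTop (𝓝 0) := by simpa using hinc.neg
    simpa [Function.comp_def] using (continuous_exp.tendsto 0).comp hneg
  have hprod : Tendsto (fun k => expTail A (k + 1) / exp (-A (k + 1)) * exp (-(A (k + 1) - A k)))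
      atTop (𝓝 1) := by
    simpa using ((tendsto_add_atTop_iff_nat 1).2 (tendsto_expTail_div_exp_neg hmono htop hinc)).mul
      hstep
  rw [← tendsto_add_atTop_iff_nat 1]
  refine hprod.congr fun k => ?_
  rw [Nat.add_sub_cancel, show -(A (k + 1) - A k) = -A (k + 1) - -A k by ring, exp_sub]
  field_simp

end

/-- Let `(a k)_{k≥1}` be positive with `a k → 0` and `A n = ∑_{k=1}^n a k → ∞`. Define
`σ k = c * a (k+1) * exp (−A k)` with `c` the normalizing constant. Then (i) the series
`∑ a (k+1) exp (−A k)` converges; (ii) the tails `T n = ∑_{k ≥ n} σ k` satisfy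
`T n ∼ c exp (−A (n−1))`; and (iii) `σ n / T n ∼ a (n+1)`. -/
theorem stmt10
    (a : ℕ → ℝ) (ha : ∀ k, 1 ≤ k → 0 < a k)
    (ha0 : Tendsto a atTop (𝓝 0))
    (A : ℕ → ℝ) (hA : ∀ n, A n = ∑ k ∈ Finset.Icc 1 n, a k)
    (hAtop : Tendsto A atTop atTop) :
    Summable (fun k => a (k + 1) * Real.exp (-A k)) ∧
    ∀ c : ℝ, 0 < c →
      (∑' k : ℕ, (if 1 ≤ k then c * a (k + 1) * Real.exp (-A k) else 0)) = 1 →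
      (Tendsto (fun n : ℕ =>
          (∑' j : ℕ, c * a (n + j + 1) * Real.exp (-A (n + j)))
            / (c * Real.exp (-A (n - 1)))) atTop (𝓝 1)) ∧
      Tendsto (fun n : ℕ =>
          (c * a (n + 1) * Real.exp (-A n))
            / ((∑' j : ℕ, c * a (n + j + 1) * Real.exp (-A (n + j))) * a (n + 1)))
        atTop (𝓝 1) := by
  have hincr : ∀ k, A (k + 1) - A k = a (k + 1) := fun k => by
    rw [hA, hA, Finset.sum_Icc_succ_top (by omega)]; ring
  have hmono : Monotone A :=
    monotone_nat_of_le_succ fun k => by linarith [hincr k, ha (k + 1) (by omega)]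
  have hincr_tendsto : Tendsto (fun k => A (k + 1) - A k) atTop (𝓝 0) := by
    simpa only [hincr] using (tendsto_add_atTop_iff_nat 1).2 ha0
  refine ⟨?_, fun c hc _ => ?_⟩
  · simpa only [hincr] using summable_increment_mul_exp_neg hmono hincr_tendsto.bddAbove_range
  have hT : ∀ n, ∑' j, c * a (n + j + 1) * exp (-A (n + j)) = c * expTail A n := fun n => by
    simp only [expTail, hincr, mul_assoc, tsum_mul_left]
  simp only [hT]
  constructor
  · simpa only [mul_div_mul_left _ _ hc.ne'] using
      tendsto_expTail_div_exp_neg_pred hmono hAtop hincr_tendsto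
  · have hinv : Tendsto (fun n => exp (-A n) / expTail A n) atTop (𝓝 1) := by
      simpa using (tendsto_expTail_div_exp_neg hmono hAtop hincr_tendsto).inv₀ one_ne_zero
    refine hinv.congr fun n => ?_
    have ha_ne : a (n + 1) ≠ 0 := (ha (n + 1) (by omega)).ne'
    field_simp
end

section
/- Let (d_n) and (ϑ_n) be monotone positive sequences with d_n ≍ d_{2n}, ϑ_n ≍ ϑ_{2n}, and ∑_n d_n^{−α}/n < ∞ for some α ∈ (0,2). Set A_n ⊆ [0,1] pairwise disjoint with |A_n| = c d_n^{−α} n^{−1} (c > 0 small enough that ∑_n |A_n| ≤ 1). Then such disjoint sets exist, and |A_n|^{−1/α} n^{−1/α} = c^{−1/α} d_n, so that if e_n(u) ≍ ϑ_n n^{1/α−1/p'} and e_n(u_∞) ≍ ϑ_n |A_n|^{−1/α} n^{−1/p'} (the Kühn diagonal entropy asymptotics under the stated regularity conditions), then e_n(u_∞)/e_n(u) ≍ d_n. -/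
/-! Normalising the summable sequence `d n ^ (-α) / n` to total mass at most `1`, the sets `A n`
can be taken to be consecutive intervals in `[0, 1]`. The identity
`(c * d n ^ (-α) / n) ^ (-1/α) = c ^ (-1/α) * d n * n ^ (1/α)` makes the second entropy
asymptotic `c ^ (-1/α) * d n` times the first one, so the quotient is squeezed between constant
multiples of `d n`. -/

open MeasureTheory Filter Set Finset

theorem exists_pairwise_disjoint_subset_Icc_volume_eq {g : ℕ → ℝ} (hg : ∀ n, 0 ≤ g n)
    (hs : Summable g) (hle : ∑' n, g n ≤ 1) :
    ∃ A : ℕ → Set ℝ, (∀ n, MeasurableSet (A n)) ∧ (∀ n, A n ⊆ Icc 0 1) ∧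
      Pairwise (Function.onFun Disjoint A) ∧ ∀ n, volume (A n) = ENNReal.ofReal (g n) := by
  set t : ℕ → ℝ := fun n => ∑ k ∈ range n, g k
  have ht : Monotone t := (sum_mono_set_of_nonneg hg).comp range_mono
  refine ⟨fun n => Ico (t n) (t (n + 1)), fun n => measurableSet_Ico, fun n => ?_,
    ht.pairwise_disjoint_on_Ico_succ, fun n => ?_⟩
  · exact Ico_subset_Icc_self.trans <| Icc_subset_Icc (sum_nonneg fun k _ => hg k)
      ((hs.sum_le_tsum _ fun k _ => hg k).trans hle)
  · simp only [Real.volume_Ico, t, sum_range_succ, add_sub_cancel_left]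

theorem exists_pos_pairwise_disjoint_subset_Icc_volume_eq_mul {f : ℕ → ℝ} (hf : ∀ n, 0 ≤ f n)
    (hs : Summable f) :
    ∃ c : ℝ, 0 < c ∧ ∃ A : ℕ → Set ℝ, (∀ n, MeasurableSet (A n)) ∧ (∀ n, A n ⊆ Icc 0 1) ∧
      Pairwise (Function.onFun Disjoint A) ∧
      ∀ n, volume (A n) = ENNReal.ofReal (c * f n) := by
  have hS : 0 ≤ ∑' n, f n := tsum_nonneg hf
  refine ⟨(∑' n, f n + 1)⁻¹, by positivity, exists_pairwise_disjoint_subset_Icc_volume_eq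
    (fun n => by have := hf n; positivity) (hs.mul_left _) ?_⟩
  rw [tsum_mul_left, inv_mul_le_iff₀ (by positivity)]
  linarith

theorem mul_rpow_neg_div_rpow_neg_one_div {α c x y : ℝ} (hα : α ≠ 0) (hc : 0 ≤ c) (hx : 0 < x)
    (hy : 0 < y) :
    (c * x ^ (-α) / y) ^ (-(1 / α)) = c ^ (-(1 / α)) * x * y ^ (1 / α) := by
  have hxx : (x ^ (-α)) ^ (-(1 / α)) = x := by
    rw [← Real.rpow_mul hx.le, show -α * -(1 / α) = 1 by field_simp, Real.rpow_one]
  rw [Real.div_rpow (by positivity) hy.le, Real.mul_rpow hc (by positivity), hxx,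
    Real.rpow_neg hy.le, div_inv_eq_mul]

theorem div_bounds_of_two_sided_bounds {x y X k a₁ a₂ b₁ b₂ : ℝ} (hX : 0 < X) (hk : 0 ≤ k)
    (ha₁ : 0 < a₁) (hb₁ : 0 ≤ b₁) (hx : a₁ * X ≤ x ∧ x ≤ a₂ * X)
    (hy : b₁ * (k * X) ≤ y ∧ y ≤ b₂ * (k * X)) :
    b₁ / a₂ * k ≤ y / x ∧ y / x ≤ b₂ / a₁ * k := by
  have hx0 : 0 < x := lt_of_lt_of_le (by positivity) hx.1
  have hy0 : 0 ≤ y := le_trans (by positivity) hy.1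
  constructor
  · calc b₁ / a₂ * k = b₁ * (k * X) / (a₂ * X) := by field_simp
      _ ≤ y / x := div_le_div₀ hy0 hy.1 hx0 hx.2
  · calc y / x ≤ b₂ * (k * X) / (a₁ * X) :=
          div_le_div₀ (hy0.trans hy.2) hy.2 (by positivity) hx.1
      _ = b₂ / a₁ * k := by field_simp

theorem stmt19_general
    {α : ℝ} (hα0 : 0 < α)
    (d ϑ : ℕ → ℝ) (hdpos : ∀ n, 1 ≤ n → 0 < d n) (hϑpos : ∀ n, 1 ≤ n → 0 < ϑ n)
    (hsum : Summable fun n : ℕ => d (n + 1) ^ (-α) / (n + 1)) :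
    ∃ c : ℝ, 0 < c ∧
      (∃ A : ℕ → Set ℝ, (∀ n, MeasurableSet (A n)) ∧
        (∀ n, 1 ≤ n → A n ⊆ Set.Icc (0 : ℝ) 1) ∧
        Pairwise (Function.onFun Disjoint A) ∧
        ∀ n, 1 ≤ n → volume (A n) = ENNReal.ofReal (c * d n ^ (-α) / n)) ∧
      (∀ n : ℕ, 1 ≤ n →
        (c * d n ^ (-α) / n) ^ (-(1 / α)) * (n : ℝ) ^ (-(1 / α))
          = c ^ (-(1 / α)) * d n) ∧
      ∀ (p' : ℝ) (en enInf : ℕ → ℝ),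
        (∃ c₁ c₂ : ℝ, 0 < c₁ ∧ 0 < c₂ ∧ ∀ᶠ n : ℕ in atTop,
          c₁ * (ϑ n * (n : ℝ) ^ (1 / α - 1 / p')) ≤ en n ∧
          en n ≤ c₂ * (ϑ n * (n : ℝ) ^ (1 / α - 1 / p'))) →
        (∃ c₁ c₂ : ℝ, 0 < c₁ ∧ 0 < c₂ ∧ ∀ᶠ n : ℕ in atTop,
          c₁ * (ϑ n * (c * d n ^ (-α) / n) ^ (-(1 / α)) * (n : ℝ) ^ (-(1 / p')))
            ≤ enInf n ∧
          enInf n ≤ c₂ * (ϑ n * (c * d n ^ (-α) / n) ^ (-(1 / α)) * (n : ℝ) ^ (-(1 / p')))) →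
        ∃ c₁ c₂ : ℝ, 0 < c₁ ∧ 0 < c₂ ∧ ∀ᶠ n : ℕ in atTop,
          c₁ * d n ≤ enInf n / en n ∧ enInf n / en n ≤ c₂ * d n := by
  have hnonneg : ∀ n : ℕ, 0 ≤ d n ^ (-α) / n := by
    rintro (_ | n)
    · simp
    · have := hdpos (n + 1) n.succ_pos
      positivity
  have hs : Summable fun n : ℕ => d n ^ (-α) / n :=
    (summable_nat_add_iff 1).mp (by simpa only [Nat.cast_add_one] using hsum)
  obtain ⟨c, hc, A, hAm, hAI, hAdisj, hAv⟩ :=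
    exists_pos_pairwise_disjoint_subset_Icc_volume_eq_mul hnonneg hs
  have hratio : ∀ n : ℕ, 1 ≤ n → (c * d n ^ (-α) / n) ^ (-(1 / α))
      = c ^ (-(1 / α)) * d n * (n : ℝ) ^ (1 / α) := fun n hn =>
    mul_rpow_neg_div_rpow_neg_one_div hα0.ne' hc.le (hdpos n hn) (by exact_mod_cast hn)
  refine ⟨c, hc, ⟨A, hAm, fun n _ => hAI n, hAdisj, fun n _ => by rw [hAv, mul_div_assoc]⟩,
    fun n hn => ?_, ?_⟩
  · rw [hratio n hn, mul_assoc, ← Real.rpow_add (by exact_mod_cast hn), add_neg_cancel,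
      Real.rpow_zero, mul_one]
  rintro p' en enInf ⟨a₁, a₂, ha₁, ha₂, hen⟩ ⟨b₁, b₂, hb₁, hb₂, henInf⟩
  refine ⟨b₁ / a₂ * c ^ (-(1 / α)), b₂ / a₁ * c ^ (-(1 / α)),
    by positivity, by positivity, ?_⟩
  filter_upwards [hen, henInf, eventually_ge_atTop 1] with n hn₁ hn₂ hn
  have hn₀ : (0 : ℝ) < n := by exact_mod_cast hn
  have hsplit : ϑ n * (c * d n ^ (-α) / n) ^ (-(1 / α)) * (n : ℝ) ^ (-(1 / p'))
      = c ^ (-(1 / α)) * d n * (ϑ n * (n : ℝ) ^ (1 / α - 1 / p')) := by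
    rw [hratio n hn, sub_eq_add_neg, Real.rpow_add hn₀]
    ring
  rw [hsplit] at hn₂
  simpa only [mul_assoc] using div_bounds_of_two_sided_bounds (by have := hϑpos n hn; positivity)
    (by have := hdpos n hn; positivity) ha₁ hb₁.le hn₁ hn₂

/-- Let `(d n)` and `(ϑ n)` be monotone positive sequences with `d n ≍ d (2n)`,
`ϑ n ≍ ϑ (2n)` and `∑ d n^(−α)/n < ∞` for some `α ∈ (0,2)`. Then there exist `c > 0` and
pairwise disjoint measurable sets `A n ⊆ [0,1]` with `|A n| = c d n^(−α) n^(−1)`; one has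
`|A n|^(−1/α) n^(−1/α) = c^(−1/α) d n`; and whenever `e n (u) ≍ ϑ n n^(1/α−1/p')` and
`e n (u_∞) ≍ ϑ n |A n|^(−1/α) n^(−1/p')` (the Kühn diagonal entropy asymptotics),
the entropy gap satisfies `e n (u_∞) / e n (u) ≍ d n`. -/
theorem stmt19
    {α : ℝ} (hα0 : 0 < α) (hα2 : α < 2)
    (d ϑ : ℕ → ℝ) (hdpos : ∀ n, 1 ≤ n → 0 < d n) (hϑpos : ∀ n, 1 ≤ n → 0 < ϑ n)
    (hdmono : Monotone d ∨ Antitone d) (hϑmono : Monotone ϑ ∨ Antitone ϑ)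
    (hddoub : ∃ C : ℝ, 0 < C ∧ ∀ n, 1 ≤ n → d (2 * n) ≤ C * d n ∧ d n ≤ C * d (2 * n))
    (hϑdoub : ∃ C : ℝ, 0 < C ∧ ∀ n, 1 ≤ n → ϑ (2 * n) ≤ C * ϑ n ∧ ϑ n ≤ C * ϑ (2 * n))
    (hsum : Summable fun n : ℕ => d (n + 1) ^ (-α) / (n + 1)) :
    ∃ c : ℝ, 0 < c ∧
      (∃ A : ℕ → Set ℝ, (∀ n, MeasurableSet (A n)) ∧
        (∀ n, 1 ≤ n → A n ⊆ Set.Icc (0 : ℝ) 1) ∧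
        Pairwise (Function.onFun Disjoint A) ∧
        ∀ n, 1 ≤ n → volume (A n) = ENNReal.ofReal (c * d n ^ (-α) / n)) ∧
      (∀ n : ℕ, 1 ≤ n →
        (c * d n ^ (-α) / n) ^ (-(1 / α)) * (n : ℝ) ^ (-(1 / α))
          = c ^ (-(1 / α)) * d n) ∧
      ∀ (p' : ℝ) (en enInf : ℕ → ℝ),
        (∃ c₁ c₂ : ℝ, 0 < c₁ ∧ 0 < c₂ ∧ ∀ᶠ n : ℕ in atTop,
          c₁ * (ϑ n * (n : ℝ) ^ (1 / α - 1 / p')) ≤ en n ∧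
          en n ≤ c₂ * (ϑ n * (n : ℝ) ^ (1 / α - 1 / p'))) →
        (∃ c₁ c₂ : ℝ, 0 < c₁ ∧ 0 < c₂ ∧ ∀ᶠ n : ℕ in atTop,
          c₁ * (ϑ n * (c * d n ^ (-α) / n) ^ (-(1 / α)) * (n : ℝ) ^ (-(1 / p')))
            ≤ enInf n ∧
          enInf n ≤ c₂ * (ϑ n * (c * d n ^ (-α) / n) ^ (-(1 / α)) * (n : ℝ) ^ (-(1 / p')))) →
        ∃ c₁ c₂ : ℝ, 0 < c₁ ∧ 0 < c₂ ∧ ∀ᶠ n : ℕ in atTop,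
          c₁ * d n ≤ enInf n / en n ∧ enInf n / en n ≤ c₂ * d n :=
  stmt19_general hα0 d ϑ hdpos hϑpos hsum
end
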